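/- Let |ψ⟩ and |φ⟩ be unit vectors in a Hilbert space and suppose that measuring each in some fixed orthonormal basis yields outcome sets F_ψ and F_φ, with disjoint correct-answer supports, each with probability at least 1−ε (0 ≤ ε ≤ 1/2). Then |⟨ψ|φ⟩| ≤ 2√(ε(1−ε)). -/

import Mathlib

/-!
Measuring in the basis of projections `P i` turns `ψ` and `φ` into the unit vectors
`a i = ‖P i ψ‖` and `b i = ‖P i φ‖` of `ℝ^ι`, and `|⟨ψ|φ⟩| ≤ ∑ i, a i * b i`.
Splitting this sum over `A` and its complement and applying Cauchy–Schwarz on each part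
bounds it by `√s √t + √(1-s) √(1-t)`, where `s ≥ 1 - ε` is the weight of `a` on `A` and
`t ≤ ε` that of `b` (as `b` has weight at least `1 - ε` on `B`).
Pairing the terms the other way, Cauchy–Schwarz in `ℝ²` bounds this by `√(1 - (s-t)²)`, and
`s - t ≥ 1 - 2ε ≥ 0` gives `2√(ε(1-ε))`.
-/

open Finset

section ProjectiveMeasurement

variable {𝕜 H ι : Type*} [RCLike 𝕜] [NormedAddCommGroup H] [InnerProductSpace 𝕜 H]
  [CompleteSpace H] [Fintype ι] {P : ι → H →L[𝕜] H}

theorem IsSelfAdjoint.inner_map_map_of_isIdempotentElem {p : H →L[𝕜] H} (hsa : IsSelfAdjoint p)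
    (hidem : IsIdempotentElem p) (x y : H) : inner 𝕜 (p x) (p y) = inner 𝕜 x (p y) := by
  rw [← ContinuousLinearMap.adjoint_inner_right, hsa.adjoint_eq, ← mul_apply_eq_comp,
    hidem.eq]

theorem inner_eq_sum_inner_of_sum_eq_one (hproj : ∀ i, IsIdempotentElem (P i))
    (hsa : ∀ i, IsSelfAdjoint (P i)) (hsum : ∑ i, P i = 1) (x y : H) :
    inner 𝕜 x y = ∑ i, inner 𝕜 (P i x) (P i y) := by
  conv_lhs =>
    rw [← one_apply_eq_self (F := H →L[𝕜] H) y, ← hsum, _root_.sum_apply, inner_sum]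
  exact sum_congr rfl fun i _ => ((hsa i).inner_map_map_of_isIdempotentElem (hproj i) x y).symm

theorem sum_norm_sq_eq_norm_sq_of_sum_eq_one (hproj : ∀ i, IsIdempotentElem (P i))
    (hsa : ∀ i, IsSelfAdjoint (P i)) (hsum : ∑ i, P i = 1) (x : H) :
    ∑ i, ‖P i x‖ ^ 2 = ‖x‖ ^ 2 := by
  have h := congrArg RCLike.re (inner_eq_sum_inner_of_sum_eq_one hproj hsa hsum x x)
  simpa only [inner_self_eq_norm_sq, map_sum] using h.symm

theorem norm_inner_le_sum_norm_mul_norm_of_sum_eq_one (hproj : ∀ i, IsIdempotentElem (P i))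
    (hsa : ∀ i, IsSelfAdjoint (P i)) (hsum : ∑ i, P i = 1) (x y : H) :
    ‖inner 𝕜 x y‖ ≤ ∑ i, ‖P i x‖ * ‖P i y‖ := by
  rw [inner_eq_sum_inner_of_sum_eq_one hproj hsa hsum]
  exact (norm_sum_le _ _).trans (sum_le_sum fun i _ => norm_inner_le_norm _ _)

end ProjectiveMeasurement

theorem Finset.sum_mul_le_sqrt_mul_sqrt_add_sqrt_mul_sqrt_compl {ι : Type*} [Fintype ι]
    [DecidableEq ι] (A : Finset ι) (a b : ι → ℝ) :
    ∑ i, a i * b i ≤ √(∑ i ∈ A, a i ^ 2) * √(∑ i ∈ A, b i ^ 2)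
      + √(∑ i ∈ Aᶜ, a i ^ 2) * √(∑ i ∈ Aᶜ, b i ^ 2) := by
  rw [← sum_add_sum_compl A]
  exact add_le_add (Real.sum_mul_le_sqrt_mul_sqrt A a b)
    (Real.sum_mul_le_sqrt_mul_sqrt Aᶜ a b)

theorem Real.sqrt_mul_sqrt_add_sqrt_mul_sqrt_le {s t : ℝ} (hs0 : 0 ≤ s) (hs1 : s ≤ 1)
    (ht0 : 0 ≤ t) (ht1 : t ≤ 1) :
    √s * √t + √(1 - s) * √(1 - t) ≤ √(1 - (s - t) ^ 2) := by
  have hs := Real.sq_sqrt hs0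
  have ht := Real.sq_sqrt ht0
  have hs' := Real.sq_sqrt (sub_nonneg.2 hs1)
  have ht' := Real.sq_sqrt (sub_nonneg.2 ht1)
  -- Cauchy–Schwarz for the vectors `(√s, √(1-t))` and `(√t, √(1-s))`
  refine Real.le_sqrt_of_sq_le ?_
  nlinarith [sq_nonneg (√s * √(1 - s) - √t * √(1 - t))]

theorem Real.sqrt_mul_sqrt_add_sqrt_mul_sqrt_le_two_mul_sqrt {ε s t : ℝ} (hε : ε ≤ 1 / 2)
    (hs : 1 - ε ≤ s) (hs1 : s ≤ 1) (ht0 : 0 ≤ t) (ht : t ≤ ε) :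
    √s * √t + √(1 - s) * √(1 - t) ≤ 2 * √(ε * (1 - ε)) := by
  calc √s * √t + √(1 - s) * √(1 - t) ≤ √(1 - (s - t) ^ 2) :=
        Real.sqrt_mul_sqrt_add_sqrt_mul_sqrt_le (by linarith) hs1 ht0 (by linarith)
    _ ≤ √(2 ^ 2 * (ε * (1 - ε))) := Real.sqrt_le_sqrt (by nlinarith)
    _ = 2 * √(ε * (1 - ε)) := by rw [Real.sqrt_mul' _ (by nlinarith), Real.sqrt_sq zero_le_two]

theorem almost_orthogonal_of_distinguishable
    {H : Type*} [NormedAddCommGroup H] [InnerProductSpace ℂ H] [CompleteSpace H]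
    {ι : Type*} [Fintype ι] (P : ι → H →L[ℂ] H)
    (hproj : ∀ i, IsIdempotentElem (P i)) (hsa : ∀ i, IsSelfAdjoint (P i))
    (hsum : ∑ i, P i = 1)
    (A B : Finset ι) (hdisj : Disjoint A B)
    (ε : ℝ) (hε1 : ε ≤ 1 / 2)
    (ψ φ : H) (hψ : ‖ψ‖ = 1) (hφ : ‖φ‖ = 1)
    (hA : 1 - ε ≤ ∑ i ∈ A, ‖P i ψ‖ ^ 2)
    (hB : 1 - ε ≤ ∑ i ∈ B, ‖P i φ‖ ^ 2) :
    ‖(inner ℂ ψ φ : ℂ)‖ ≤ 2 * Real.sqrt (ε * (1 - ε)) := by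
  classical
  have hnorm (x : H) (hx : ‖x‖ = 1) : ∑ i, ‖P i x‖ ^ 2 = 1 := by
    rw [sum_norm_sq_eq_norm_sq_of_sum_eq_one hproj hsa hsum, hx, one_pow]
  have hcompl (x : H) (hx : ‖x‖ = 1) :
      ∑ i ∈ Aᶜ, ‖P i x‖ ^ 2 = 1 - ∑ i ∈ A, ‖P i x‖ ^ 2 := by
    rw [← hnorm x hx, ← sum_add_sum_compl A]; ring
  have hψA : ∑ i ∈ A, ‖P i ψ‖ ^ 2 ≤ 1 :=
    hnorm ψ hψ ▸ sum_le_univ_sum_of_nonneg fun _ => sq_nonneg _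
  have hφA : ∑ i ∈ A, ‖P i φ‖ ^ 2 ≤ ε := by
    have hAB := hnorm φ hφ ▸
      sum_le_univ_sum_of_nonneg (s := A ∪ B) fun i => sq_nonneg ‖P i φ‖
    rw [sum_union hdisj] at hAB
    linarith
  calc ‖(inner ℂ ψ φ : ℂ)‖ ≤ ∑ i, ‖P i ψ‖ * ‖P i φ‖ :=
        norm_inner_le_sum_norm_mul_norm_of_sum_eq_one hproj hsa hsum ψ φ
    _ ≤ _ := sum_mul_le_sqrt_mul_sqrt_add_sqrt_mul_sqrt_compl A _ _
    _ ≤ 2 * Real.sqrt (ε * (1 - ε)) := by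
      rw [hcompl ψ hψ, hcompl φ hφ]
      exact Real.sqrt_mul_sqrt_add_sqrt_mul_sqrt_le_two_mul_sqrt hε1 hA hψA
        (sum_nonneg fun _ _ => sq_nonneg _) hφA
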